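/- arXiv:1301.4632 — 4 statements merged into one kernel-verified Lean document; each statement's English description precedes it below -/
import Mathlib

section
/- Let A be a commutative ring with a regular sequence t₀, t₁, …, t_m, and let à = A[T₁, …, T_m]/(t₀T₁ − t₁, …, t₀T_m − t_m). Then the natural map (A/(t₀, t₁, …, t_m))[T₁, …, T_m] → Ã/(t₀) is an isomorphism of rings. -/
open MvPolynomial

/-- Let `A` be a commutative ring with a regular sequence `t₀, t₁, …, t_m`, and
let `Ã = A[T₁,…,T_m]/(t₀T₁ − t₁, …, t₀T_m − t_m)`.  Then the natural map
`(A/(t₀,…,t_m))[T₁,…,T_m] → Ã/(t₀)` is an isomorphism of rings; equivalently, the canonical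
surjection `A[T₁,…,T_m] → Ã/(t₀)` has kernel exactly the ideal generated by `t₀, t₁, …, t_m`. -/
theorem stmt_1 (A : Type*) [CommRing A] (m : ℕ) (t : Fin (m + 1) → A)
    (hreg : RingTheory.Sequence.IsRegular A (List.ofFn t)) :
    letI J : Ideal (MvPolynomial (Fin m) A) :=
      Ideal.span (Set.range fun i : Fin m => C (t 0) * X i - C (t i.succ))
    letI ψ := Ideal.Quotient.mk J
    letI φ := (Ideal.Quotient.mk (Ideal.span {ψ (C (t 0))})).comp ψ
    Function.Surjective φ ∧
      RingHom.ker φ = Ideal.span (Set.range fun i : Fin (m + 1) => C (t i)) := by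
  set J : Ideal (MvPolynomial (Fin m) A) :=
    Ideal.span (Set.range fun i : Fin m => C (t 0) * X i - C (t i.succ)) with hJ
  set ψ := Ideal.Quotient.mk J with hψ
  set φ := (Ideal.Quotient.mk (Ideal.span {ψ (C (t 0))})).comp ψ with hφ
  refine ⟨Ideal.Quotient.mk_surjective.comp Ideal.Quotient.mk_surjective, ?_⟩
  have h1 : RingHom.ker φ = Ideal.span {C (t 0)} ⊔ J := by
    have : RingHom.ker φ = Ideal.comap ψ (Ideal.span {ψ (C (t 0))}) := by
      show RingHom.ker (RingHom.comp _ _) = _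
      rw [← RingHom.comap_ker, Ideal.mk_ker]
    rw [this]
    have : Ideal.span {ψ (C (t 0))} = Ideal.map ψ (Ideal.span {C (t 0)}) := by
      rw [Ideal.map_span, Set.image_singleton]
    rw [this, Ideal.comap_map_of_surjective ψ Ideal.Quotient.mk_surjective,
      ← RingHom.ker_eq_comap_bot, Ideal.mk_ker]
  rw [h1]
  apply le_antisymm
  · refine sup_le (Ideal.span_le.mpr ?_) (Ideal.span_le.mpr ?_)
    · rintro x rfl
      exact Ideal.subset_span ⟨0, rfl⟩
    · rintro x ⟨i, rfl⟩
      exact Ideal.sub_mem _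
        (Ideal.mul_mem_right _ _ (Ideal.subset_span ⟨0, rfl⟩))
        (Ideal.subset_span ⟨i.succ, rfl⟩)
  · refine Ideal.span_le.mpr ?_
    rintro x ⟨i, rfl⟩
    refine Fin.cases ?_ (fun j => ?_) i
    · exact Ideal.mem_sup_left (Ideal.subset_span rfl)
    · have : C (t j.succ) = C (t 0) * X j - (C (t 0) * X j - C (t j.succ)) := by ring
      show C (t j.succ) ∈ _
      rw [this]
      exact Ideal.sub_mem _
        (Ideal.mem_sup_left (Ideal.mul_mem_right _ _ (Ideal.subset_span rfl)))
        (Ideal.mem_sup_right (Ideal.subset_span ⟨j, rfl⟩))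
end

section
/- Let P_• be a multiplicative oversimplicial object in a category C with finite limits, and let f_• : Q_• → P_• be a morphism of oversimplicial objects such that f₀ : Q₀ → P₀ is a monomorphism. Then Q_• is multiplicative if and only if f_• is a multiplicative morphism. -/
open CategoryTheory CategoryTheory.Limits

/-- The category `Δ̃` whose objects are the finite sets `[0,n] = {0,…,n}` (encoded by `n : ℕ`)
and whose morphisms are all set maps. -/
abbrev OSCat : Type := ℕ

instance : Category OSCat where
  Hom n m := Fin (n + 1) → Fin (m + 1)
  id _ := id
  comp f g := g ∘ f

/-- The object `[0,n]` of `Δ̃`. -/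
abbrev OS (n : ℕ) : OSCat := n

/-- The inclusion `[0,m] → [0,m+l]`. -/
def inclHom (m l : ℕ) : OS m ⟶ OS (m + l) :=
  show Fin (m + 1) → Fin (m + l + 1) from fun i => ⟨i, by omega⟩

/-- The shift `[0,l] → [0,m+l]`, `i ↦ m + i`. -/
def shiftHom (m l : ℕ) : OS l ⟶ OS (m + l) :=
  show Fin (l + 1) → Fin (m + l + 1) from fun i => ⟨m + i, by omega⟩

/-- The map `[0] → [0,m]` sending `0` to `m`. -/
def toLastHom (m : ℕ) : OS 0 ⟶ OS m :=
  fun _ => Fin.last m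

/-- The map `[0] → [0,l]` sending `0` to `0`. -/
def toZeroHom (l : ℕ) : OS 0 ⟶ OS l :=
  fun _ => 0

variable {C : Type*} [Category C]

/-- An oversimplicial object `P` of `C` (a contravariant functor `Δ̃ → C`) is multiplicative if
every additive cocartesian diagram `[0,m] ← [0] → [0,l]` with pushout `[0,m+l]` induces a
cartesian diagram `P_m ← P_{m+l} → P_l` over `P₀`. -/
def IsMultOS (P : OSCatᵒᵖ ⥤ C) : Prop :=
  ∀ m l : ℕ,
    IsPullback (P.map (inclHom m l).op) (P.map (shiftHom m l).op)
      (P.map (toLastHom m).op) (P.map (toZeroHom l).op)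

/-- A morphism `f : Q → P` of oversimplicial objects is multiplicative if for every additive
cocartesian diagram `[0,m] ← [0] → [0,l]` with pushout `[0,n]`, the square with corners
`Q_m ×_{P_m} P_n`, `Q_n`, `Q_l ×_{P_l} P_n` and `P_n` is cartesian. -/
def IsMultHomOS [HasPullbacks C] {Q P : OSCatᵒᵖ ⥤ C} (f : Q ⟶ P) : Prop :=
  ∀ m l : ℕ,
    IsPullback
      (pullback.lift (Q.map (inclHom m l).op) (f.app (Opposite.op (OS (m + l))))
        (f.naturality (inclHom m l).op) :
          Q.obj (Opposite.op (OS (m + l))) ⟶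
            pullback (f.app (Opposite.op (OS m))) (P.map (inclHom m l).op))
      (pullback.lift (Q.map (shiftHom m l).op) (f.app (Opposite.op (OS (m + l))))
        (f.naturality (shiftHom m l).op) :
          Q.obj (Opposite.op (OS (m + l))) ⟶
            pullback (f.app (Opposite.op (OS l))) (P.map (shiftHom m l).op))
      (pullback.snd (f.app (Opposite.op (OS m))) (P.map (inclHom m l).op))
      (pullback.snd (f.app (Opposite.op (OS l))) (P.map (shiftHom m l).op))

/-! Fix `m, l` and put `n = m + l`. Since `P_n ≅ P_m ×_{P₀} P_l`, pasting pullbacks identifies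
`(Q_m ×_{P_m} P_n) ×_{P_n} (Q_l ×_{P_l} P_n)` with `Q_m ×_{P₀} Q_l`, the fibre product over the
feet of the square of `Q` followed by `f₀`. So `f` is multiplicative at `(m, l)` iff that square
is cartesian after composing its feet with `f₀`, and composing with a monomorphism does not
change a fibre product. -/

namespace CategoryTheory.IsPullback

theorem comp_mono_iff {W X Y Z Z' : C} {fst : W ⟶ X} {snd : W ⟶ Y} {f : X ⟶ Z} {g : Y ⟶ Z}
    (e : Z ⟶ Z') [Mono e] (w : fst ≫ f = snd ≫ g) :
    IsPullback fst snd (f ≫ e) (g ≫ e) ↔ IsPullback fst snd f g :=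
  ⟨fun h => .mk' w (fun _ _ _ => h.hom_ext) fun _ a b hab =>
      ⟨h.lift a b (by simp [reassoc_of% hab]), by simp, by simp⟩,
    fun h => .mk' (by simp [reassoc_of% w]) (fun _ _ _ => h.hom_ext) fun _ a b hab =>
      ⟨h.lift a b ((cancel_mono e).1 (by simpa using hab)), by simp, by simp⟩⟩

theorem lift_lift_iff {Qn Qm Ql Pn Pm Pl P₀ : C} {qm : Qn ⟶ Qm} {ql : Qn ⟶ Ql}
    {pm : Pn ⟶ Pm} {pl : Pn ⟶ Pl} {am : Pm ⟶ P₀} {al : Pl ⟶ P₀}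
    {fn : Qn ⟶ Pn} {fm : Qm ⟶ Pm} {fl : Ql ⟶ Pl} [HasPullback fm pm] [HasPullback fl pl]
    (hP : IsPullback pm pl am al) (hm : qm ≫ fm = fn ≫ pm) (hl : ql ≫ fl = fn ≫ pl) :
    IsPullback (pullback.lift qm fn hm) (pullback.lift ql fn hl)
        (pullback.snd fm pm) (pullback.snd fl pl) ↔
      IsPullback qm ql (fm ≫ am) (fl ≫ al) := by
  have top : pullback.lift qm fn hm ≫ pullback.snd fm pm =
      pullback.lift ql fn hl ≫ pullback.snd fl pl := by
    rw [pullback.lift_snd, pullback.lift_snd]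
  have left : pullback.lift qm fn hm ≫ pullback.snd fm pm ≫ pl = ql ≫ fl := by
    rw [pullback.lift_snd_assoc, hl]
  rw [← (IsPullback.of_hasPullback fl pl).flip.paste_vert_iff top, pullback.lift_fst,
    ← ((IsPullback.of_hasPullback fm pm).paste_vert hP).paste_horiz_iff left, pullback.lift_fst]

end CategoryTheory.IsPullback

theorem toLastHom_comp_inclHom (m l : ℕ) :
    toLastHom m ≫ inclHom m l = toZeroHom l ≫ shiftHom m l := by
  funext j
  show inclHom m l (toLastHom m j) = shiftHom m l (toZeroHom l j)
  simp [inclHom, shiftHom, toLastHom, toZeroHom]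

/-- Let `P` be a multiplicative oversimplicial object in a category `C` with
finite limits, and let `f : Q → P` be a morphism of oversimplicial objects such that
`f₀ : Q₀ → P₀` is a monomorphism.  Then `Q` is multiplicative if and only if `f` is a
multiplicative morphism. -/
theorem stmt_6 {C : Type*} [Category C] [HasFiniteLimits C]
    (P Q : OSCatᵒᵖ ⥤ C) (hP : IsMultOS P) (f : Q ⟶ P)
    (hmono : Mono (f.app (Opposite.op (OS 0)))) :
    IsMultOS Q ↔ IsMultHomOS f := by
  refine forall₂_congr fun m l => ?_
  rw [(hP m l).lift_lift_iff, ← f.naturality, ← f.naturality, IsPullback.comp_mono_iff]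
  simp only [← Functor.map_comp, ← op_comp, toLastHom_comp_inclHom]
end

section
/- Let k be a field of characteristic p > 0 and A a commutative k-algebra. Let A[F] denote the noncommutative ring ⊕_{n≥0} A·Fⁿ with multiplication determined by F·a = a^p·F for a ∈ A. Then the additive group A[F]/(F−1)A[F] is isomorphic to the additive group of the perfection A^{p^{−∞}} = colim(A → A → ⋯) along the Frobenius maps a ↦ a^p. -/
/-!
The stage maps `a ↦ (n, a)` into the colimit are additive and kill the relations
`a^p·F^{n+1} − a·Fⁿ`, which are exactly the relations defining the colimit. Conversely
`(n, a) ↦ [a·Fⁿ]` respects those relations, and it is additive because addition in the colimit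
first moves both summands to a common stage by Frobenius, which the quotient does not see.
The two maps are inverse to each other on generators.
-/

namespace PerfectClosure

variable (A : Type*) [CommRing A] (p : ℕ)

/-- `(F − 1)A[F]`, with `A[F]` encoded additively as `ℕ →₀ A` (`Finsupp.single n a` is `a·Fⁿ`). -/
noncomputable def frobeniusRelations : AddSubgroup (ℕ →₀ A) :=
  AddSubgroup.closure
    (Set.range fun na : ℕ × A =>
      Finsupp.single (na.1 + 1) (na.2 ^ p) - Finsupp.single na.1 na.2)

theorem single_succ_pow_sub_single_mem (n : ℕ) (a : A) :
    Finsupp.single (n + 1) (a ^ p) - Finsupp.single n a ∈ frobeniusRelations A p :=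
  AddSubgroup.subset_closure ⟨(n, a), rfl⟩

variable [Fact p.Prime] [CharP A p]

local notation "Q" => (ℕ →₀ A) ⧸ frobeniusRelations A p

theorem quotientMk_single_succ_frobenius (n : ℕ) (a : A) :
    (Finsupp.single (n + 1) (frobenius A p a) : Q) = Finsupp.single n a := by
  rw [QuotientAddGroup.eq, neg_add_eq_sub, ← neg_sub, neg_mem_iff, frobenius_def]
  exact single_succ_pow_sub_single_mem A p n a

theorem quotientMk_single_add_iterate_frobenius (m n : ℕ) (a : A) :
    (Finsupp.single (m + n) ((frobenius A p)^[m] a) : Q) = Finsupp.single n a := by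
  induction m with
  | zero => simp
  | succ m ih =>
    rw [Function.iterate_succ_apply', add_right_comm,
      quotientMk_single_succ_frobenius, ih]

noncomputable def mkAddHom (n : ℕ) : A →+ PerfectClosure A p where
  toFun a := mk A p (n, a)
  map_zero' := mk_zero_right A p n
  map_add' _ _ := R.sound A p n n _ _ (iterate_map_add _ _ _ _)

noncomputable def ofFinsupp : (ℕ →₀ A) →+ PerfectClosure A p :=
  Finsupp.liftAddHom (mkAddHom A p)

@[simp]
theorem ofFinsupp_single (n : ℕ) (a : A) :
    ofFinsupp A p (Finsupp.single n a) = mk A p (n, a) :=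
  Finsupp.liftAddHom_apply_single _ _ _

theorem frobeniusRelations_le_ker_ofFinsupp : frobeniusRelations A p ≤ (ofFinsupp A p).ker := by
  rw [frobeniusRelations, AddSubgroup.closure_le]
  rintro _ ⟨⟨n, a⟩, rfl⟩
  simp

noncomputable def ofQuotient : Q →+ PerfectClosure A p :=
  QuotientAddGroup.lift _ (ofFinsupp A p) (frobeniusRelations_le_ker_ofFinsupp A p)

noncomputable def toQuotient : PerfectClosure A p →+ Q where
  toFun := Quot.lift (fun x : ℕ × A => (Finsupp.single x.1 x.2 : Q))
    (by rintro _ _ ⟨n, a⟩; exact (quotientMk_single_succ_frobenius A p n a).symm)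
  map_zero' := by
    show ((Finsupp.single 0 0 : ℕ →₀ A) : Q) = 0
    simp
  map_add' x y := by
    induction x using induction_on with | h x =>
    induction y using induction_on with | h y =>
    obtain ⟨n, a⟩ := x
    obtain ⟨m, b⟩ := y
    show ((Finsupp.single (n + m) _ : ℕ →₀ A) : Q) = Finsupp.single n a + Finsupp.single m b
    rw [Finsupp.single_add, QuotientAddGroup.mk_add, add_comm n m,
      quotientMk_single_add_iterate_frobenius, add_comm m n,
      quotientMk_single_add_iterate_frobenius]

@[simp]
theorem toQuotient_mk (x : ℕ × A) :
    toQuotient A p (mk A p x) = (Finsupp.single x.1 x.2 : Q) :=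
  rfl

noncomputable def quotientFrobeniusRelationsEquiv : Q ≃+ PerfectClosure A p :=
  AddMonoidHom.toAddEquiv (ofQuotient A p) (toQuotient A p)
    (by ext n a; simp [ofQuotient])
    (by ext x; induction x using induction_on; simp [ofQuotient])

theorem quotientFrobeniusRelationsEquiv_mk_single (n : ℕ) (a : A) :
    quotientFrobeniusRelationsEquiv A p (Finsupp.single n a : Q) = mk A p (n, a) := by
  simp [quotientFrobeniusRelationsEquiv, ofQuotient]

end PerfectClosure

theorem stmt_9_general (p : ℕ) [Fact p.Prime]
    (A : Type*) [CommRing A] [CharP A p] :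
    letI S : AddSubgroup (ℕ →₀ A) :=
      AddSubgroup.closure
        (Set.range fun na : ℕ × A =>
          Finsupp.single (na.1 + 1) (na.2 ^ p) - Finsupp.single na.1 na.2)
    ∃ e : ((ℕ →₀ A) ⧸ S) ≃+ PerfectClosure A p,
      ∀ (n : ℕ) (a : A),
        e (QuotientAddGroup.mk (Finsupp.single n a)) = PerfectClosure.mk A p (n, a) :=
  ⟨PerfectClosure.quotientFrobeniusRelationsEquiv A p,
    PerfectClosure.quotientFrobeniusRelationsEquiv_mk_single A p⟩

/-- Let `k` be a field of characteristic `p > 0` and `A` a commutative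
`k`-algebra.  Let `A[F]` denote the twisted polynomial ring `⊕_{n≥0} A·Fⁿ` with `F·a = a^p·F`
(whose additive group is `ℕ →₀ A`).  The additive subgroup `(F−1)A[F]` is generated by the
elements `a^p·F^{n+1} − a·Fⁿ`.  Then the additive group `A[F]/(F−1)A[F]` is isomorphic to the
additive group of the perfection `A^{p^{−∞}} = colim (A → A → ⋯)` along Frobenius, via the
compatible system of maps sending (the class of) `a·Fⁿ` to the stage-`n` element `a`. -/
theorem stmt_9 (p : ℕ) [Fact p.Prime] (k : Type*) [Field k] [CharP k p]
    (A : Type*) [CommRing A] [Algebra k A] [CharP A p] :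
    letI S : AddSubgroup (ℕ →₀ A) :=
      AddSubgroup.closure
        (Set.range fun na : ℕ × A =>
          Finsupp.single (na.1 + 1) (na.2 ^ p) - Finsupp.single na.1 na.2)
    ∃ e : ((ℕ →₀ A) ⧸ S) ≃+ PerfectClosure A p,
      ∀ (n : ℕ) (a : A),
        e (QuotientAddGroup.mk (Finsupp.single n a)) = PerfectClosure.mk A p (n, a) :=
  stmt_9_general p A
end

section
/- Let k be a field of characteristic p > 0, n ≥ 1 an integer prime to p, and consider the ring R = k[x, y, u, v][1/(1 + u x^n)] with the substitutions x' = x + u x^{n+1}, y' = y + v x^{n+1}. Then the element 1/x'^n − 1/x^n = (1/x^n)((1 + u x^n)^{−n} − 1) of R[1/x] lies in R, and its image in R/(x) ≅ k[y,u,v] equals −n·u. -/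
open MvPolynomial
set_option maxHeartbeats 1000000
set_option synthInstance.maxHeartbeats 400000

/-- Abstract computation in the localization at `x`. -/
lemma aux1_stmt18 {T : Type*} [CommRing T] (X F c j : T) (n : ℕ)
    (hX : IsUnit X) (hF : IsUnit F)
    (hj : F ^ n * j = 1) (hc : X ^ n * c = F ^ n - 1) :
    -c * j = Ring.inverse ((X * F) ^ n) - Ring.inverse (X ^ n) := by
  have hXn : IsUnit (X ^ n) := hX.pow n
  have hprod : IsUnit (X ^ n * F ^ n) := hXn.mul (hF.pow n)
  apply hprod.mul_left_cancel
  have c1 : (X ^ n * F ^ n) * Ring.inverse (X ^ n * F ^ n) = 1 :=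
    Ring.mul_inverse_cancel _ hprod
  have c2 : X ^ n * Ring.inverse (X ^ n) = 1 := Ring.mul_inverse_cancel _ hXn
  rw [mul_pow]
  calc X ^ n * F ^ n * (-c * j)
      = -(X ^ n * c) * (F ^ n * j) := by ring
    _ = (1 - F ^ n) * 1 := by rw [hj, hc]; ring
    _ = X ^ n * F ^ n * (Ring.inverse (X ^ n * F ^ n) - Ring.inverse (X ^ n)) := by
        rw [mul_sub, c1, show X ^ n * F ^ n * Ring.inverse (X ^ n) =
          F ^ n * (X ^ n * Ring.inverse (X ^ n)) from by ring, c2]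
        ring

/-- Abstract computation in the quotient modulo `x`. -/
lemma aux2_stmt18 {S : Type*} [CommRing S] (x u₁ u₂ c j F d : S)
    (hj : j * F = 1) (hd : u₁ * u₂ * F - c = x * d) :
    Ideal.Quotient.mk (Ideal.span {x}) (-c * j) =
      Ideal.Quotient.mk (Ideal.span {x}) (-u₁ * u₂) := by
  rw [Ideal.Quotient.eq, Ideal.mem_span_singleton]
  exact ⟨j * d, by linear_combination (-(u₁ * u₂)) * hj + j * hd⟩

/-- Let `k` be a field of characteristic `p > 0`, `n ≥ 1` an integer prime to
`p`, and consider the ring `R = k[x,y,u,v][1/(1 + u xⁿ)]` with the substitution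
`x' = x + u x^{n+1}`.  Then the element `1/x'ⁿ − 1/xⁿ` of `R[1/x]` lies in (the image of) `R`,
and its image in `R/(x) ≅ k[y,u,v]` equals `−n·u`.  (Here `x, y, u, v` are the variables
`X 0, X 1, X 2, X 3` and inverses in `R[1/x]` are expressed via `Ring.inverse`.) -/
theorem stmt_18 (k : Type*) [Field k] (p : ℕ) (hp : 0 < p) [CharP k p]
    (n : ℕ) (hn : 1 ≤ n) (hpn : ¬ p ∣ n) :
    letI A := MvPolynomial (Fin 4) k
    letI f : A := 1 + X 2 * X 0 ^ n
    letI R := Localization.Away f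
    letI ax := algebraMap A R
    letI xR : R := ax (X 0)
    letI x'R : R := ax (X 0 + X 2 * X 0 ^ (n + 1))
    letI φ := algebraMap R (Localization.Away xR)
    ∃ r : R,
      φ r = Ring.inverse (φ x'R ^ n) - Ring.inverse (φ xR ^ n) ∧
      Ideal.Quotient.mk (Ideal.span {xR}) r =
        Ideal.Quotient.mk (Ideal.span {xR}) (-(n : R) * ax (X 2)) := by
  -- names for the concrete objects (no `set`, to keep everything syntactic)
  letI A : Type _ := MvPolynomial (Fin 4) k
  letI f : A := 1 + X 2 * X 0 ^ n
  letI R : Type _ := Localization.Away f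
  letI ax : A →+* R := algebraMap A R
  letI xR : R := ax (X 0)
  letI φ : R →+* Localization.Away xR := algebraMap R (Localization.Away xR)
  -- polynomial-level identities
  have hf1 : f - 1 = X 2 * X 0 ^ n := by show (1 + X 2 * X 0 ^ n : A) - 1 = _; ring
  have hfn : f ^ n = 1 + X 0 ^ n * (X 2 * ∑ i ∈ Finset.range n, f ^ i) := by
    have hg := geom_sum_mul f n
    linear_combination -hg + (∑ i ∈ Finset.range n, f ^ i) * hf1
  have hA' : (X 0 : A) ^ n * (X 2 * ∑ i ∈ Finset.range n, f ^ i) = f ^ n - 1 := by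
    linear_combination -hfn
  have hd1 : (X 0 : A) ∣ f - 1 := by
    refine ⟨X 2 * X 0 ^ (n - 1), ?_⟩
    have hn' : n - 1 + 1 = n := Nat.succ_pred_eq_of_pos hn
    rw [hf1]
    conv_lhs => rw [← hn']
    ring
  have hd2 : ∀ m : ℕ, (X 0 : A) ∣ f ^ m - 1 := fun m => by
    have := sub_dvd_pow_sub_pow f 1 m
    rw [one_pow] at this
    exact hd1.trans this
  have hd3 : (X 0 : A) ∣ (n : A) * X 2 * f ^ n - X 2 * ∑ i ∈ Finset.range n, f ^ i := by
    have key : (n : A) * X 2 * f ^ n - X 2 * ∑ i ∈ Finset.range n, f ^ i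
        = X 2 * ∑ i ∈ Finset.range n, (f ^ n - f ^ i) := by
      rw [Finset.sum_sub_distrib, Finset.sum_const, Finset.card_range, nsmul_eq_mul]
      ring
    rw [key]
    refine Dvd.dvd.mul_left ?_ _
    refine Finset.dvd_sum fun i _ => ?_
    have := dvd_sub (hd2 n) (hd2 i)
    rwa [sub_sub_sub_cancel_right] at this
  -- R-level facts
  have hfu : IsUnit (ax f) := IsLocalization.Away.algebraMap_isUnit f
  have hju : Ring.inverse ((ax f) ^ n) * (ax f) ^ n = 1 :=
    Ring.inverse_mul_cancel _ (hfu.pow n)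
  obtain ⟨d0, hd0⟩ := hd3
  refine ⟨-(ax (X 2 * ∑ i ∈ Finset.range n, f ^ i)) * Ring.inverse ((ax f) ^ n), ?_, ?_⟩
  · -- the element equals 1/x'^n - 1/x^n in the localization at x
    have hx'A : (X 0 + X 2 * X 0 ^ (n + 1) : A) = X 0 * f := by
      show _ = X 0 * (1 + X 2 * X 0 ^ n); ring
    have hx' : φ (ax (X 0 + X 2 * X 0 ^ (n + 1))) = φ (ax (X 0)) * φ (ax f) := by
      rw [hx'A, map_mul, map_mul]
    rw [hx', map_mul, map_neg]
    have hjφ : φ (ax f) ^ n * φ (Ring.inverse ((ax f) ^ n)) = 1 := by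
      rw [← map_pow, ← map_mul, mul_comm, hju, map_one]
    have hcφ : φ (ax (X 0)) ^ n * φ (ax (X 2 * ∑ i ∈ Finset.range n, f ^ i))
        = φ (ax f) ^ n - 1 := by
      have := congrArg (φ.comp ax) hA'
      simpa only [map_mul, map_pow, map_sub, map_one, RingHom.comp_apply] using this
    exact aux1_stmt18 (φ (ax (X 0))) (φ (ax f))
      (φ (ax (X 2 * ∑ i ∈ Finset.range n, f ^ i))) (φ (Ring.inverse ((ax f) ^ n))) n
      (IsLocalization.Away.algebraMap_isUnit (S := Localization.Away xR) xR)
      (hfu.map φ) hjφ hcφ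
  · -- the element is congruent to -n*u modulo x
    have hdR : (n : R) * ax (X 2) * (ax f) ^ n - ax (X 2 * ∑ i ∈ Finset.range n, f ^ i)
        = ax (X 0) * ax d0 := by
      have := congrArg ax hd0
      simpa only [map_mul, map_pow, map_sub, map_natCast] using this
    exact aux2_stmt18 (ax (X 0)) (n : R) (ax (X 2))
      (ax (X 2 * ∑ i ∈ Finset.range n, f ^ i)) (Ring.inverse ((ax f) ^ n))
      ((ax f) ^ n) (ax d0) hju hdR
end
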